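/- Let G be a MAGIIAN whose MKBSC expansion G^K fulfills the PDK condition, and let R be an observable reachability objective in G with translation R^K in G^K. Then a winning profile of first-order knowledge-based strategies exists in G for R if and only if a winning profile of observation-based memoryless strategies exists in G^K for R^K. (In fact, every profile of first-order knowledge-based strategies in G is at the same time a profile of observation-based memoryless strategies in G^K and vice versa, and one is winning iff the other is.) -/
import Mathlib


open Set

/-- A multi-agent game with imperfect information against Nature (MAGIIAN).
`obs i l` is the observation block of agent `i` containing location `l`;
the axioms make the blocks of each agent a partition of the locations. -/
structure MAGIIAN (Agt Loc : Type) (Act : Agt → Type) where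
  init : Loc
  trans : Loc → (∀ i, Act i) → Loc → Prop
  obs : Agt → Loc → Set Loc
  obs_mem : ∀ i l, l ∈ obs i l
  obs_eq : ∀ i l l', l' ∈ obs i l → obs i l' = obs i l

namespace MAGIIAN

variable {Agt Loc : Type} {Act : Agt → Type}

/-- `o` is an observation (block) of agent `i` in `G`. -/
def IsObs (G : MAGIIAN Agt Loc Act) (i : Agt) (o : Set Loc) : Prop :=
  ∃ l, o = G.obs i l

/-- Transition relation `Δ_i` of the projection `G|_i`. -/
def projTrans (G : MAGIIAN Agt Loc Act) (i : Agt) (l : Loc) (a : Act i) (l' : Loc) : Prop :=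
  ∃ σ : ∀ j, Act j, σ i = a ∧ G.trans l σ l'

/-- Transition relation `Δ^K_i` of the individual KBSC expansion `(G|_i)^K`. -/
def kTrans (G : MAGIIAN Agt Loc Act) (i : Agt) (s : Set Loc) (a : Act i) (s' : Set Loc) : Prop :=
  ∃ o : Set Loc, G.IsObs i o ∧ s' = {l' ∈ o | ∃ l ∈ s, G.projTrans i l a l'} ∧ s'.Nonempty

/-- Pruned joint transition relation `Δ^K` of the MKBSC expansion `G^K`
(unrealisable transitions are removed). -/
def kTransJ (G : MAGIIAN Agt Loc Act) (s : Agt → Set Loc) (σ : ∀ i, Act i)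
    (s' : Agt → Set Loc) : Prop :=
  (∀ i, G.kTrans i (s i) (σ i) (s' i)) ∧
    ∃ l ∈ (⋂ i, s i), ∃ l' ∈ (⋂ i, s' i), G.trans l σ l'

/-- The MKBSC expansion `G^K`, as a MAGIIAN over joint knowledge states;
agent `i`'s observation of a joint knowledge state is determined by its `i`-th component. -/
def expand (G : MAGIIAN Agt Loc Act) : MAGIIAN Agt (Agt → Set Loc) Act where
  init := fun _ => {G.init}
  trans := G.kTransJ
  obs := fun i s => {s' | s' i = s i}
  obs_mem := fun _ _ => rfl
  obs_eq := by
    intro i s s' h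
    simp only [Set.mem_setOf_eq] at h
    ext t
    simp [Set.mem_setOf_eq, h]

/-- Reachability from the initial location. -/
def Reachable (G : MAGIIAN Agt Loc Act) (l : Loc) : Prop :=
  Relation.ReflTransGen (fun x y => ∃ σ, G.trans x σ y) G.init l

/-- The MKBSC expansion `G^K` fulfills the perfect-distributed-knowledge (PDK) condition:
every reachable joint knowledge state has singleton component intersection. -/
def PDK (G : MAGIIAN Agt Loc Act) : Prop :=
  ∀ s : Agt → Set Loc, G.expand.Reachable s → ∃ l : Loc, (⋂ i, s i) = {l}

/-- A full play, given as its sequences of locations and of joint actions. -/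
def IsPlay (G : MAGIIAN Agt Loc Act) (l : ℕ → Loc) (σ : ℕ → ∀ i, Act i) : Prop :=
  l 0 = G.init ∧ ∀ k, G.trans (l k) (σ k) (l (k + 1))

/-- Observation history of agent `i` (list of observation blocks) up to time `k`. -/
def obsHist (G : MAGIIAN Agt Loc Act) (i : Agt) (l : ℕ → Loc) (k : ℕ) : List (Set Loc) :=
  (List.range (k + 1)).map fun j => G.obs i (l j)

/-- Outcomes (location sequences) of a profile of observation-based
perfect-recall strategies. -/
def PROutcome (G : MAGIIAN Agt Loc Act) (α : ∀ i, List (Set Loc) → Act i)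
    (l : ℕ → Loc) : Prop :=
  ∃ σ : ℕ → ∀ i, Act i, G.IsPlay l σ ∧ ∀ k i, σ k i = α i (G.obsHist i l k)

/-- Outcomes of a profile of observation-based memoryless strategies. -/
def MLOutcome (G : MAGIIAN Agt Loc Act) (α : ∀ i, Set Loc → Act i) (l : ℕ → Loc) : Prop :=
  ∃ σ : ℕ → ∀ i, Act i, G.IsPlay l σ ∧ ∀ k i, σ k i = α i (G.obs i (l k))

/-- A play is winning for an observable reachability objective `R` iff some
agent at some point observes an observation in `R`. -/
def WinsReach (G : MAGIIAN Agt Loc Act) (R : Set (Set Loc)) (l : ℕ → Loc) : Prop :=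
  ∃ i k, G.obs i (l k) ∈ R

/-- A play is winning for an observable safety objective `F` iff at every point
some agent observes an observation in `F`. -/
def WinsSafe (G : MAGIIAN Agt Loc Act) (F : Set (Set Loc)) (l : ℕ → Loc) : Prop :=
  ∀ k, ∃ i, G.obs i (l k) ∈ F

/-- `ob_i`: maps an observation block of `G^K` for agent `i` (all of whose members have the
same `i`-th component `A`) to the unique observation of `i` in `G` that includes `A`. -/
def obMap (G : MAGIIAN Agt Loc Act) (i : Agt) (O : Set (Agt → Set Loc)) : Set Loc :=
  ⋃ s ∈ O, ⋃ l ∈ s i, G.obs i l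

/-- The translated objective `R^K = {s ∈ S : ∃ i, ∃ o ∈ R ∩ Obs_i, s i ⊆ o}`,
as a set of joint knowledge states. -/
def transObj (G : MAGIIAN Agt Loc Act) (R : Set (Set Loc)) : Set (Agt → Set Loc) :=
  {s | ∃ i, ∃ o ∈ R, G.IsObs i o ∧ s i ⊆ o}

end MAGIIAN


namespace MAGIIAN

variable {Agt Loc : Type} {Act : Agt → Type}

/-- Outcomes in `G^K` of a profile of observation-based memoryless strategies,
each agent's action depending only on the `i`-th component (its knowledge state)
of the current joint knowledge state. -/
def KMLOutcome (G : MAGIIAN Agt Loc Act) (α : ∀ i, Set Loc → Act i)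
    (s : ℕ → Agt → Set Loc) : Prop :=
  ∃ σ : ℕ → ∀ i, Act i, s 0 = (fun _ => {G.init}) ∧
    (∀ k, G.kTransJ (s k) (σ k) (s (k + 1))) ∧
    (∀ k i, σ k i = α i (s k i))

/-- Outcomes in `G` of the profile of induced transducers `{A_i(α^K_i)}`:
each agent `i` starts with memory state `{l_init}`, plays `α i` on its current
memory state `s`, and updates its memory to the unique `Δ^K_i`-successor `s'` of `s`
contained in its new observation. -/
def TransducerOutcome (G : MAGIIAN Agt Loc Act) (α : ∀ i, Set Loc → Act i)
    (l : ℕ → Loc) : Prop :=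
  l 0 = G.init ∧ ∃ σ : ℕ → ∀ i, Act i, ∃ mem : Agt → ℕ → Set Loc,
    (∀ i, mem i 0 = {G.init}) ∧
    (∀ k, G.trans (l k) (σ k) (l (k + 1))) ∧
    (∀ k i, σ k i = α i (mem i k)) ∧
    (∀ k i, G.kTrans i (mem i k) (σ k i) (mem i (k + 1)) ∧
      mem i (k + 1) ⊆ G.obs i (l (k + 1)))

/-- The knowledge update function `δ_i` of agent `i` (as a total, set-valued map:
it is `defined` precisely when the resulting set is non-empty). -/
def deltaSet (G : MAGIIAN Agt Loc Act) (i : Agt) (s : Set Loc) (a : Act i)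
    (o : Set Loc) : Set Loc :=
  {l' ∈ o | ∃ σ : ∀ j, Act j, σ i = a ∧ ∃ l ∈ s, G.trans l σ l'}

/-- Outcomes in `G` of the profile of first-order knowledge-based strategies based on
`{α^K_i}` and the knowledge updates `{δ_i}`: each agent `i` starts with knowledge
state `{l_init}`, plays `α i` on its current knowledge state, and updates it by `δ_i`
upon its new observation (the update being defined, i.e. non-empty). -/
def KBOutcome (G : MAGIIAN Agt Loc Act) (α : ∀ i, Set Loc → Act i)
    (l : ℕ → Loc) : Prop :=
  l 0 = G.init ∧ ∃ σ : ℕ → ∀ i, Act i, ∃ mem : Agt → ℕ → Set Loc,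
    (∀ i, mem i 0 = {G.init}) ∧
    (∀ k, G.trans (l k) (σ k) (l (k + 1))) ∧
    (∀ k i, σ k i = α i (mem i k)) ∧
    (∀ k i, mem i (k + 1) = G.deltaSet i (mem i k) (σ k i) (G.obs i (l (k + 1))) ∧
      (mem i (k + 1)).Nonempty)

/-- If `G^K` fulfills the PDK condition, then a winning profile of first-order
knowledge-based strategies exists in `G` for an observable reachability objective `R`
iff a winning profile of observation-based memoryless strategies exists in `G^K` for
`R^K` (the two classes of profiles being identified). -/
theorem kb_strategy_existence_iff (G : MAGIIAN Agt Loc Act) (hPDK : G.PDK)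
    (R : Set (Set Loc)) (hR : ∀ o ∈ R, ∃ i, G.IsObs i o) :
    (∃ α : ∀ i, Set Loc → Act i, ∀ l, G.KBOutcome α l → G.WinsReach R l) ↔
    (∃ α : ∀ i, Set Loc → Act i,
      ∀ s : ℕ → Agt → Set Loc, G.KMLOutcome α s → ∃ k, s k ∈ G.transObj R) := by
  constructor
  · rintro ⟨α, hα⟩
    refine ⟨α, ?_⟩
    rintro s ⟨σ, hs0, hstep, hact⟩
    have reach : ∀ k, G.expand.Reachable (s k) := by
      intro k
      induction k with
      | zero =>
        have h : G.expand.Reachable (fun _ => ({G.init} : Set Loc)) :=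
          Relation.ReflTransGen.refl
        rwa [hs0]
      | succ k ih => exact ih.tail ⟨σ k, hstep k⟩
    choose l hl using fun k => hPDK (s k) (reach k)
    have hmem : ∀ k i, l k ∈ s k i := by
      intro k i
      have h : l k ∈ ⋂ j, s k j := by rw [hl k]; exact rfl
      exact Set.mem_iInter.mp h i
    have hl0 : l 0 = G.init := by
      have h1 : G.init ∈ ⋂ i, s 0 i := by
        rw [hs0]; exact Set.mem_iInter.mpr fun i => rfl
      rw [hl 0] at h1
      exact (Set.eq_of_mem_singleton h1).symm
    have htrans : ∀ k, G.trans (l k) (σ k) (l (k + 1)) := by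
      intro k
      obtain ⟨-, x, hx, y, hy, hxy⟩ := hstep k
      rw [hl k] at hx
      rw [hl (k + 1)] at hy
      have hx' := Set.eq_of_mem_singleton hx
      have hy' := Set.eq_of_mem_singleton hy
      subst hx'; subst hy'; exact hxy
    have hobs : ∀ k i, s (k + 1) i ⊆ G.obs i (l (k + 1)) ∧
        s (k + 1) i = G.deltaSet i (s k i) (σ k i) (G.obs i (l (k + 1))) := by
      intro k i
      obtain ⟨hk, -⟩ := hstep k
      obtain ⟨o, ⟨m, rfl⟩, heq, hne⟩ := hk i
      have hsub : s (k + 1) i ⊆ G.obs i m := by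
        rw [heq]; exact fun x hx => hx.1
      have hoeq : G.obs i m = G.obs i (l (k + 1)) :=
        (G.obs_eq i m (l (k + 1)) (hsub (hmem (k + 1) i))).symm
      constructor
      · rw [← hoeq]; exact hsub
      · rw [heq, ← hoeq]
        ext x
        simp only [MAGIIAN.deltaSet, MAGIIAN.projTrans, Set.mem_setOf_eq]
        exact ⟨fun ⟨hx, y, hy, τ, hτ, ht⟩ => ⟨hx, τ, hτ, y, hy, ht⟩,
          fun ⟨hx, τ, hτ, y, hy, ht⟩ => ⟨hx, y, hy, τ, hτ, ht⟩⟩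
    have hKB : G.KBOutcome α l := by
      refine ⟨hl0, σ, fun i k => s k i, fun i => congrFun hs0 i, htrans,
        fun k i => hact k i, ?_⟩
      intro k i
      exact ⟨(hobs k i).2, ⟨l (k + 1), hmem (k + 1) i⟩⟩
    obtain ⟨i, k, hik⟩ := hα l hKB
    refine ⟨k, i, G.obs i (l k), hik, ⟨l k, rfl⟩, ?_⟩
    cases k with
    | zero =>
      rw [congrFun hs0 i, hl0]
      exact Set.singleton_subset_iff.mpr (G.obs_mem i G.init)
    | succ k => exact (hobs k i).1
  · rintro ⟨α, hα⟩
    refine ⟨α, ?_⟩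
    rintro l ⟨hl0, σ, M, hM0, htrans, hact, hupd⟩
    have hmem : ∀ k i, l k ∈ M i k := by
      intro k
      induction k with
      | zero => intro i; rw [hM0 i, hl0]; exact rfl
      | succ k ih =>
        intro i
        rw [(hupd k i).1]
        exact ⟨G.obs_mem i (l (k + 1)), σ k, rfl, l k, ih i, htrans k⟩
    have hKML : G.KMLOutcome α (fun k i => M i k) := by
      refine ⟨σ, funext fun i => hM0 i, ?_, fun k i => hact k i⟩
      intro k
      constructor
      · intro i
        refine ⟨G.obs i (l (k + 1)), ⟨l (k + 1), rfl⟩, ?_, (hupd k i).2⟩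
        show M i (k + 1) = _
        rw [(hupd k i).1]
        ext x
        simp only [MAGIIAN.deltaSet, MAGIIAN.projTrans, Set.mem_setOf_eq]
        exact ⟨fun ⟨hx, τ, hτ, y, hy, ht⟩ => ⟨hx, y, hy, τ, hτ, ht⟩,
          fun ⟨hx, y, hy, τ, hτ, ht⟩ => ⟨hx, τ, hτ, y, hy, ht⟩⟩
      · exact ⟨l k, Set.mem_iInter.mpr fun i => hmem k i,
          l (k + 1), Set.mem_iInter.mpr fun i => hmem (k + 1) i, htrans k⟩
    obtain ⟨k, i, o, hoR, ⟨m, rfl⟩, hsub⟩ := hα _ hKML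
    refine ⟨i, k, ?_⟩
    rw [G.obs_eq i m (l k) (hsub (hmem k i))]
    exact hoR

end MAGIIAN
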